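/- arXiv:2205.13894 — 9 statements merged into one kernel-verified Lean document; each statement's English description precedes it below -/
import Mathlib

section
/- For a square matrix Y, the Lyapunov operator L_Y(X) = XY + Y*X on n×n matrices is bijective if and only if Y is Lyapunov regular, i.e., λ_i + conj(λ_j) ≠ 0 for all eigenvalues λ_i, λ_j of Y. -/
/-!
`X Y + Yᴴ X = 0` is the Sylvester equation `A X = X B` with `A = Yᴴ`, `B = -Y`. If `A X = X B`
then `p(A) X = X p(B)` for every polynomial `p`; taking `p` the characteristic polynomial of `B`,
Cayley–Hamilton gives `p(A) X = 0`, and by spectral mapping `p(A)` is invertible as soon as `A`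
and `B` have no common eigenvalue. Conversely, a common eigenvalue `c` with `A u = c u` and
`vᵀ B = c vᵀ` yields the nonzero solution `X = u vᵀ`. As `σ(Yᴴ) = conj σ(Y)` and
`σ(-Y) = -σ(Y)`, disjointness of the two spectra is Lyapunov regularity, and in finite dimension
an injective linear map is bijective.
-/

open Matrix Polynomial

theorem Polynomial.aeval_mul_eq_mul_aeval_of_mul_eq_mul {R A : Type*} [CommSemiring R]
    [Semiring A] [Algebra R A] {a b x : A} (h : a * x = x * b) (p : R[X]) :
    aeval a p * x = x * aeval b p := by
  induction p using Polynomial.induction_on' with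
  | add p q hp hq => rw [map_add, map_add, add_mul, mul_add, hp, hq]
  | monomial k c =>
    have hk : a ^ k * x = x * b ^ k := (SemiconjBy.pow_right h.symm k).symm
    rw [aeval_monomial, aeval_monomial, ← Algebra.smul_def, ← Algebra.smul_def, smul_mul_assoc,
      mul_smul_comm, hk]

namespace Matrix

variable {ι K : Type*} [Fintype ι] [DecidableEq ι] [Field K]

theorem spectrum_transpose (A : Matrix ι ι K) : spectrum K Aᵀ = spectrum K A := by
  ext c
  rw [mem_spectrum_iff_isRoot_charpoly, mem_spectrum_iff_isRoot_charpoly, charpoly_transpose]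

theorem exists_mulVec_eq_smul_of_mem_spectrum {A : Matrix ι ι K} {c : K}
    (hc : c ∈ spectrum K A) : ∃ v ≠ 0, A *ᵥ v = c • v := by
  rw [← spectrum_toLin', ← Module.End.hasEigenvalue_iff_mem_spectrum] at hc
  obtain ⟨v, hv⟩ := hc.exists_hasEigenvector
  exact ⟨v, hv.2, Module.End.mem_eigenspace_iff.mp hv.1⟩

theorem exists_vecMul_eq_smul_of_mem_spectrum {A : Matrix ι ι K} {c : K}
    (hc : c ∈ spectrum K A) : ∃ v ≠ 0, v ᵥ* A = c • v := by
  rw [← spectrum_transpose] at hc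
  obtain ⟨v, hv0, hv⟩ := exists_mulVec_eq_smul_of_mem_spectrum hc
  exact ⟨v, hv0, by rwa [mulVec_transpose] at hv⟩

theorem exists_ne_zero_mul_eq_mul_of_mem_spectrum {A B : Matrix ι ι K} {c : K}
    (hA : c ∈ spectrum K A) (hB : c ∈ spectrum K B) : ∃ X ≠ 0, A * X = X * B := by
  obtain ⟨u, hu0, hu⟩ := exists_mulVec_eq_smul_of_mem_spectrum hA
  obtain ⟨v, hv0, hv⟩ := exists_vecMul_eq_smul_of_mem_spectrum hB
  refine ⟨vecMulVec u v, vecMulVec_ne_zero hu0 hv0, ?_⟩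
  rw [mul_vecMulVec, vecMulVec_mul, hu, hv, smul_vecMulVec, vecMulVec_smul]

theorem eq_zero_of_mul_eq_mul_of_disjoint_spectrum [IsAlgClosed K] {A B X : Matrix ι ι K}
    (h : A * X = X * B) (hAB : Disjoint (spectrum K A) (spectrum K B)) : X = 0 := by
  nontriviality Matrix ι ι K
  have hunit : IsUnit (aeval A B.charpoly) := by
    rw [← spectrum.zero_notMem_iff K, spectrum.map_polynomial_aeval_of_nonempty _ _
      (spectrum.nonempty_of_isAlgClosed_of_finiteDimensional K A)]
    rintro ⟨c, hcA, hc0⟩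
    exact hAB.ne_of_mem hcA (mem_spectrum_iff_isRoot_charpoly.mpr hc0) rfl
  rw [← hunit.mul_right_eq_zero, aeval_mul_eq_mul_aeval_of_mul_eq_mul h, aeval_self_charpoly,
    mul_zero]

theorem forall_mul_eq_mul_imp_eq_zero_iff_disjoint_spectrum [IsAlgClosed K]
    {A B : Matrix ι ι K} :
    (∀ X, A * X = X * B → X = 0) ↔ Disjoint (spectrum K A) (spectrum K B) := by
  refine ⟨fun h => Set.disjoint_left.mpr fun c hA hB => ?_,
    fun hAB X hX => eq_zero_of_mul_eq_mul_of_disjoint_spectrum hX hAB⟩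
  obtain ⟨X, hX0, hX⟩ := exists_ne_zero_mul_eq_mul_of_mem_spectrum hA hB
  exact hX0 (h X hX)

end Matrix

theorem spectrum.disjoint_star_neg_iff {A : Type*} [Ring A] [StarRing A] [Algebra ℂ A]
    [StarModule ℂ A] (a : A) :
    Disjoint (spectrum ℂ (star a)) (spectrum ℂ (-a)) ↔
      ∀ μ ∈ spectrum ℂ a, ∀ ν ∈ spectrum ℂ a, μ + starRingEnd ℂ ν ≠ 0 := by
  simp only [spectrum.map_star, ← spectrum.neg_eq, Set.disjoint_left, Set.mem_star, Set.mem_neg]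
  refine ⟨fun h μ hμ ν hν hsum => h (a := starRingEnd ℂ ν) (by simpa) ?_,
    fun h c hc hnc => h _ hnc _ hc (by simp)⟩
  rwa [eq_neg_of_add_eq_zero_right hsum, neg_neg]

/-- The Lyapunov operator `X ↦ X*Y + Yᴴ*X` is bijective iff `Y` is Lyapunov
regular, i.e. `μ + conj ν ≠ 0` for all eigenvalues `μ, ν` of `Y`. -/
theorem stmt1 {n : ℕ} (Y : Matrix (Fin n) (Fin n) ℂ) :
    Function.Bijective (fun X : Matrix (Fin n) (Fin n) ℂ => X * Y + Yᴴ * X) ↔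
      ∀ μ ∈ spectrum ℂ Y, ∀ ν ∈ spectrum ℂ Y, μ + starRingEnd ℂ ν ≠ 0 := by
  let L := LinearMap.mulRight ℂ Y + LinearMap.mulLeft ℂ Yᴴ
  have hker : ∀ X, L X = 0 ↔ Yᴴ * X = X * -Y := fun X => by
    rw [mul_neg, ← add_eq_zero_iff_eq_neg']
    rfl
  change Function.Bijective L ↔ _
  rw [Function.Bijective, and_iff_left_of_imp LinearMap.injective_iff_surjective.mp,
    injective_iff_map_eq_zero, ← spectrum.disjoint_star_neg_iff, star_eq_conjTranspose,
    ← forall_mul_eq_mul_imp_eq_zero_iff_disjoint_spectrum]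
  simp only [hker]
end

section
/- The set C_L(A) = {B : A ≤_L B} of matrices Lyapunov dominating A is a convex invertible cone containing A. -/
open Matrix
open scoped ComplexOrder

/-! For each fixed `H`, the map `B ↦ H B + Bᴴ H` is real-linear, so positive semidefiniteness
of its values is preserved under sums and nonnegative multiples; and
`(B⁻¹)ᴴ (H B + Bᴴ H) B⁻¹ = H B⁻¹ + (B⁻¹)ᴴ H` is a congruence, which preserves it too. -/

namespace Matrix

variable {𝕜 ι : Type*} [RCLike 𝕜] [Fintype ι]

def lyapunov (H B : Matrix ι ι 𝕜) : Matrix ι ι 𝕜 := H * B + Bᴴ * H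

def LyapunovLE (A B : Matrix ι ι 𝕜) : Prop :=
  ∀ H : Matrix ι ι 𝕜, H.IsHermitian → (lyapunov H A).PosSemidef → (lyapunov H B).PosSemidef

lemma lyapunov_add (H B₁ B₂ : Matrix ι ι 𝕜) :
    lyapunov H (B₁ + B₂) = lyapunov H B₁ + lyapunov H B₂ := by
  simp only [lyapunov, conjTranspose_add, mul_add, add_mul]
  abel

lemma lyapunov_real_smul (H B : Matrix ι ι 𝕜) (c : ℝ) :
    lyapunov H (c • B) = c • lyapunov H B := by
  simp only [lyapunov, conjTranspose_smul, star_trivial, mul_smul_comm, smul_mul_assoc, smul_add]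

lemma conjTranspose_mul_lyapunov_mul_inv [DecidableEq ι] (H : Matrix ι ι 𝕜)
    {B : Matrix ι ι 𝕜} (hB : IsUnit B.det) :
    (B⁻¹)ᴴ * lyapunov H B * B⁻¹ = lyapunov H B⁻¹ := by
  have hinv : B * B⁻¹ = 1 := mul_nonsing_inv B hB
  have hinv' : (B⁻¹)ᴴ * Bᴴ = 1 := by rw [← conjTranspose_mul, hinv, conjTranspose_one]
  calc (B⁻¹)ᴴ * lyapunov H B * B⁻¹
      = (B⁻¹)ᴴ * H * (B * B⁻¹) + ((B⁻¹)ᴴ * Bᴴ) * (H * B⁻¹) := by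
        simp only [lyapunov]; noncomm_ring
    _ = lyapunov H B⁻¹ := by rw [hinv, hinv', mul_one, one_mul, lyapunov, add_comm]

namespace LyapunovLE

@[refl]
lemma refl (A : Matrix ι ι 𝕜) : LyapunovLE A A := fun _ _ h => h

lemma add {A B₁ B₂ : Matrix ι ι 𝕜} (h₁ : LyapunovLE A B₁) (h₂ : LyapunovLE A B₂) :
    LyapunovLE A (B₁ + B₂) := fun H hH hA => by
  rw [lyapunov_add]
  exact (h₁ H hH hA).add (h₂ H hH hA)

lemma real_smul {A B : Matrix ι ι 𝕜} (h : LyapunovLE A B) {c : ℝ} (hc : 0 ≤ c) :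
    LyapunovLE A (c • B) := fun H hH hA => by
  rw [lyapunov_real_smul]
  exact (h H hH hA).smul hc

lemma inv [DecidableEq ι] {A B : Matrix ι ι 𝕜} (h : LyapunovLE A B) (hB : IsUnit B) :
    LyapunovLE A B⁻¹ := fun H hH hA => by
  rw [← conjTranspose_mul_lyapunov_mul_inv H ((isUnit_iff_isUnit_det B).mp hB)]
  exact (h H hH hA).conjTranspose_mul_mul_same B⁻¹

end LyapunovLE

end Matrix

/-- The set `C_L(A)` of matrices Lyapunov dominating `A` is a convex invertible
cone containing `A`. -/
theorem stmt3 {n : ℕ} (A : Matrix (Fin n) (Fin n) ℂ) :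
    let C : Set (Matrix (Fin n) (Fin n) ℂ) :=
      {B | ∀ H : Matrix (Fin n) (Fin n) ℂ, H.IsHermitian →
        (H * A + Aᴴ * H).PosSemidef → (H * B + Bᴴ * H).PosSemidef}
    A ∈ C ∧
    (∀ B₁ ∈ C, ∀ B₂ ∈ C, B₁ + B₂ ∈ C) ∧
    (∀ B ∈ C, ∀ c : ℝ, 0 ≤ c → c • B ∈ C) ∧
    (∀ B ∈ C, IsUnit B → B⁻¹ ∈ C) := by
  exact ⟨LyapunovLE.refl A, fun _ h₁ _ h₂ => LyapunovLE.add h₁ h₂,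
    fun _ h _ hc => LyapunovLE.real_smul h hc, fun _ h hB => LyapunovLE.inv h hB⟩
end

section
/- If A and B are both Lyapunov regular matrices, then \overline{H}(A) ⊆ \overline{H}(B) holds if and only if H(A) ⊆ H(B), where H(Y) (resp. \overline{H}(Y)) denotes the set of Hermitian H with HY + Y*H positive definite (resp. positive semidefinite). -/
/-!
A kernel element `X` of the Lyapunov operator `X ↦ X A + Aᴴ X` satisfies `X A = (-Aᴴ) X`; for a
Lyapunov regular `A` the spectra of `A` and `-Aᴴ` are disjoint, so `X = 0` (Sylvester). The
operator is therefore bijective and there is a Hermitian `G_A` with `G_A A + Aᴴ G_A = 1`.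

If `H̄(A) ⊆ H̄(B)` and `H ∈ H(A)`, then `H - t G_B ∈ H̄(A)` for small `t > 0`, so
`H B + Bᴴ H ≥ t • 1`. If `H(A) ⊆ H(B)` and `H ∈ H̄(A)`, then `H + ε G_A ∈ H(A)` for every `ε > 0`,
and letting `ε → 0` gives `H ∈ H̄(B)`.
-/

open Matrix Polynomial Filter Topology
open scoped ComplexOrder MatrixOrder

theorem SemiconjBy.aeval {K R : Type*} [CommSemiring K] [Semiring R] [Algebra K R] {x a c : R}
    (h : SemiconjBy x a c) (p : K[X]) : SemiconjBy x (aeval a p) (aeval c p) := by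
  induction p using Polynomial.induction_on' with
  | add p q hp hq => simpa only [map_add] using hp.add_right hq
  | monomial k r =>
    simp only [aeval_monomial]
    exact SemiconjBy.mul_right (Algebra.commutes r x).symm (h.pow_right k)

namespace Matrix

section Loewner

variable {ι 𝕜 : Type*} [RCLike 𝕜]

theorem PosDef.exists_pos_smul_one_le [Fintype ι] [DecidableEq ι] {M : Matrix ι ι 𝕜}
    (hM : M.PosDef) : ∃ r : ℝ, 0 < r ∧ r • (1 : Matrix ι ι 𝕜) ≤ M := by
  rcases subsingleton_or_nontrivial (Matrix ι ι 𝕜) with _ | _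
  · exact ⟨1, one_pos, (Subsingleton.elim _ _).le⟩
  have hM' := isStrictlyPositive_iff_posDef.2 hM
  simpa [Algebra.algebraMap_eq_smul_one] using
    (CFC.exists_pos_algebraMap_le_iff hM'.isSelfAdjoint).2 fun _ hx ↦ hM'.spectrum_pos hx

theorem posDef_of_smul_one_le [DecidableEq ι] {M : Matrix ι ι 𝕜} {r : ℝ} (hr : 0 < r)
    (h : r • 1 ≤ M) : M.PosDef := by
  simpa using (PosDef.one.smul hr).add_posSemidef (le_iff.1 h)

theorem IsHermitian.exists_le_smul_one [Fintype ι] [DecidableEq ι] {N : Matrix ι ι 𝕜}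
    (hN : N.IsHermitian) : ∃ s : ℝ, 0 < s ∧ N ≤ s • 1 := by
  obtain ⟨s, hs⟩ := N.finite_real_spectrum.bddAbove
  refine ⟨max s 1, by positivity, ?_⟩
  rw [← Algebra.algebraMap_eq_smul_one]
  exact le_algebraMap_of_spectrum_le (ha := hN) fun x hx ↦ (hs hx).trans (le_max_left s 1)

theorem PosDef.exists_pos_smul_le [Fintype ι] [DecidableEq ι] {M N : Matrix ι ι 𝕜}
    (hM : M.PosDef) (hN : N.IsHermitian) : ∃ t : ℝ, 0 < t ∧ t • N ≤ M := by
  obtain ⟨r, hr, hrM⟩ := hM.exists_pos_smul_one_le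
  obtain ⟨s, hs, hNs⟩ := hN.exists_le_smul_one
  refine ⟨r / s, by positivity, le_trans ?_ hrM⟩
  calc (r / s) • N ≤ (r / s) • s • (1 : Matrix ι ι 𝕜) :=
        smul_le_smul_of_nonneg_left hNs (by positivity)
    _ = r • 1 := by rw [smul_smul, div_mul_cancel₀ r hs.ne']

theorem PosSemidef.of_forall_pos_add_smul [Fintype ι] {P K : Matrix ι ι 𝕜} (hP : P.IsHermitian)
    (h : ∀ ε : ℝ, 0 < ε → (P + ε • K).PosSemidef) : P.PosSemidef := by
  refine .of_dotProduct_mulVec_nonneg hP fun x ↦ ?_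
  have hlim : Tendsto (fun ε : ℝ ↦ star x ⬝ᵥ (P + ε • K) *ᵥ x) (𝓝[>] 0)
      (𝓝 (star x ⬝ᵥ P *ᵥ x)) := by
    simp only [add_mulVec, smul_mulVec, dotProduct_add, dotProduct_smul]
    refine tendsto_nhdsWithin_of_tendsto_nhds ?_
    exact (continuous_const.add (continuous_id.smul continuous_const)).tendsto' _ _ (by simp)
  exact ge_of_tendsto hlim (eventually_nhdsWithin_of_forall fun ε hε ↦
    (h ε hε).dotProduct_mulVec_nonneg x)

end Loewner

variable {ι : Type*} [Fintype ι] [DecidableEq ι]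

/- Cayley–Hamilton: `X χ_A(A) = χ_A(C) X`, and `χ_A(C)` is invertible because `χ_A` has no root
in the spectrum of `C`. -/
theorem eq_zero_of_semiconjBy_of_disjoint_spectrum {K : Type*} [Field K] [IsAlgClosed K]
    {X A C : Matrix ι ι K} (hAC : Disjoint (spectrum K A) (spectrum K C))
    (h : SemiconjBy X A C) : X = 0 := by
  nontriviality Matrix ι ι K
  have hunit : IsUnit (aeval C A.charpoly) := by
    rw [← spectrum.zero_notMem_iff K, spectrum.map_polynomial_aeval_of_nonempty _ _
      (spectrum.nonempty_of_isAlgClosed_of_finiteDimensional K C)]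
    rintro ⟨μ, hμC, hμA⟩
    exact hAC.ne_of_mem (mem_spectrum_iff_isRoot_charpoly.2 hμA) hμC rfl
  have hX := (h.aeval A.charpoly).eq
  rw [aeval_self_charpoly, mul_zero] at hX
  exact hunit.mul_left_cancel (by rw [← hX, mul_zero])

def LyapunovRegular (A : Matrix ι ι ℂ) : Prop :=
  ∀ μ ∈ spectrum ℂ A, ∀ ν ∈ spectrum ℂ A, μ + starRingEnd ℂ ν ≠ 0

def lyapunovMap (A : Matrix ι ι ℂ) : Matrix ι ι ℂ →ₗ[ℂ] Matrix ι ι ℂ :=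
  LinearMap.mulRight ℂ A + LinearMap.mulLeft ℂ Aᴴ

theorem lyapunovMap_apply (A X : Matrix ι ι ℂ) : lyapunovMap A X = X * A + Aᴴ * X := rfl

theorem conjTranspose_lyapunovMap (A X : Matrix ι ι ℂ) :
    (lyapunovMap A X)ᴴ = lyapunovMap A Xᴴ := by
  simp only [lyapunovMap_apply, conjTranspose_add, conjTranspose_mul, conjTranspose_conjTranspose,
    add_comm]

theorem IsHermitian.lyapunovMap {H : Matrix ι ι ℂ} (hH : H.IsHermitian) (A : Matrix ι ι ℂ) :
    (lyapunovMap A H).IsHermitian := by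
  rw [IsHermitian, conjTranspose_lyapunovMap, hH.eq]

namespace LyapunovRegular

variable {A : Matrix ι ι ℂ}

theorem disjoint_spectrum_neg_conjTranspose (hA : A.LyapunovRegular) :
    Disjoint (spectrum ℂ A) (spectrum ℂ (-Aᴴ)) := by
  rw [Set.disjoint_left]
  intro μ hμ hμ'
  rw [← spectrum.neg_eq, Set.mem_neg, ← star_eq_conjTranspose, spectrum.map_star, Set.mem_star]
    at hμ'
  exact hA μ hμ _ hμ' (by simp)

theorem injective_lyapunovMap (hA : A.LyapunovRegular) : Function.Injective (lyapunovMap A) := by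
  rw [← LinearMap.ker_eq_bot, LinearMap.ker_eq_bot']
  intro X hX
  refine eq_zero_of_semiconjBy_of_disjoint_spectrum hA.disjoint_spectrum_neg_conjTranspose ?_
  rw [SemiconjBy, neg_mul, eq_neg_iff_add_eq_zero]
  exact hX

theorem exists_isHermitian_lyapunovMap_eq (hA : A.LyapunovRegular) {Q : Matrix ι ι ℂ}
    (hQ : Q.IsHermitian) : ∃ G, G.IsHermitian ∧ lyapunovMap A G = Q := by
  obtain ⟨G, hG⟩ := LinearMap.injective_iff_surjective.mp hA.injective_lyapunovMap Q
  refine ⟨G, hA.injective_lyapunovMap ?_, hG⟩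
  rw [← conjTranspose_lyapunovMap, hG, hQ.eq]

end LyapunovRegular

end Matrix

/-- For Lyapunov regular `A` and `B`, the inclusion of non-strict Lyapunov
solution sets is equivalent to the inclusion of strict Lyapunov solution
sets. -/
theorem stmt4 {n : ℕ} (A B : Matrix (Fin n) (Fin n) ℂ)
    (hregA : ∀ μ ∈ spectrum ℂ A, ∀ ν ∈ spectrum ℂ A, μ + starRingEnd ℂ ν ≠ 0)
    (hregB : ∀ μ ∈ spectrum ℂ B, ∀ ν ∈ spectrum ℂ B, μ + starRingEnd ℂ ν ≠ 0) :
    (∀ H : Matrix (Fin n) (Fin n) ℂ, H.IsHermitian →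
        (H * A + Aᴴ * H).PosSemidef → (H * B + Bᴴ * H).PosSemidef) ↔
      (∀ H : Matrix (Fin n) (Fin n) ℂ, H.IsHermitian →
        (H * A + Aᴴ * H).PosDef → (H * B + Bᴴ * H).PosDef) := by
  obtain ⟨GA, hGA, hLGA⟩ := LyapunovRegular.exists_isHermitian_lyapunovMap_eq hregA isHermitian_one
  obtain ⟨GB, hGB, hLGB⟩ := LyapunovRegular.exists_isHermitian_lyapunovMap_eq hregB isHermitian_one
  simp only [← lyapunovMap_apply]
  constructor
  · intro hsemi H hH hA
    obtain ⟨t, ht, htle⟩ := hA.exists_pos_smul_le (hGB.lyapunovMap A)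
    have hB := hsemi (H - t • GB) (hH.sub (hGB.smul (.all t)))
      (by rwa [map_sub, LinearMap.map_smul_of_tower, ← le_iff])
    rw [map_sub, LinearMap.map_smul_of_tower, hLGB, ← le_iff] at hB
    exact posDef_of_smul_one_le ht hB
  · intro hdef H hH hA
    refine PosSemidef.of_forall_pos_add_smul (K := lyapunovMap B GA) (hH.lyapunovMap B)
      fun ε hε ↦ ?_
    have hB := hdef (H + ε • GA) (hH.add (hGA.smul (.all ε))) (by
      rw [map_add, LinearMap.map_smul_of_tower, hLGA]
      exact PosDef.posSemidef_add hA (PosDef.one.smul hε))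
    rw [map_add, LinearMap.map_smul_of_tower] at hB
    exact hB.posSemidef
end

section
/- If W ⊆ C^{n×q} and Z ⊆ C^{n'×q'} are subspaces both satisfying property (C1), then the direct sum W ⊕ Z, viewed as block-diagonal matrices inside C^{(n+n')×(q+q')}, also satisfies property (C1). -/
open Matrix

/-- Property (C1) of a set of matrices. -/
def HasC1 {n q : Type*} [Fintype q] (W : Set (Matrix n q ℂ)) : Prop :=
  ∀ (k : ℕ) (X : Fin k → Matrix n q ℂ), (∀ i, X i ∈ W) → LinearIndependent ℂ X →
    ∃ v : q → ℂ, LinearIndependent ℂ fun i => (X i).mulVec v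

/-!
For a subspace `W`, (C1) says exactly that every subspace `V ≤ W` has a separating vector `v`,
i.e. `A ↦ A *ᵥ v` is injective on `V`: apply (C1) to a basis of `V`. Given `V` inside the
block-diagonal sum, let `v₁` separate the upper-left blocks of `V` and `v₂` separate the
lower-right blocks of those elements of `V` whose upper-left block vanishes. If
`diag(X, Y) *ᵥ (v₁, v₂) = 0`, then `X *ᵥ v₁ = 0` forces `X = 0`, after which `Y *ᵥ v₂ = 0`
forces `Y = 0`; so `(v₁, v₂)` separates `V`.
-/

namespace Matrix

variable {R l m n o : Type*} [CommSemiring R]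

def toBlocks₁₁ₗ : Matrix (n ⊕ o) (l ⊕ m) R →ₗ[R] Matrix n l R where
  toFun := toBlocks₁₁
  map_add' _ _ := rfl
  map_smul' _ _ := rfl

def toBlocks₂₂ₗ : Matrix (n ⊕ o) (l ⊕ m) R →ₗ[R] Matrix o m R where
  toFun := toBlocks₂₂
  map_add' _ _ := rfl
  map_smul' _ _ := rfl

@[simp]
theorem toBlocks₁₁ₗ_apply (M : Matrix (n ⊕ o) (l ⊕ m) R) : toBlocks₁₁ₗ M = M.toBlocks₁₁ := rfl

@[simp]
theorem toBlocks₂₂ₗ_apply (M : Matrix (n ⊕ o) (l ⊕ m) R) : toBlocks₂₂ₗ M = M.toBlocks₂₂ := rfl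

theorem fromBlocks_zero_mulVec_sumElim [Fintype l] [Fintype m] (X : Matrix n l R)
    (Y : Matrix o m R) (v₁ : l → R) (v₂ : m → R) :
    fromBlocks X 0 0 Y *ᵥ Sum.elim v₁ v₂ = Sum.elim (X *ᵥ v₁) (Y *ᵥ v₂) := by
  simp [fromBlocks_mulVec]

end Matrix

namespace Submodule

variable {R l m n o : Type*} [CommSemiring R]

def HasSeparatingVector [Fintype m] (V : Submodule R (Matrix n m R)) : Prop :=
  ∃ v : m → R, ∀ A ∈ V, A *ᵥ v = 0 → A = 0

def blockDiag (W : Submodule R (Matrix n l R)) (Z : Submodule R (Matrix o m R)) :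
    Submodule R (Matrix (n ⊕ o) (l ⊕ m) R) where
  carrier := {M | ∃ X ∈ W, ∃ Y ∈ Z, M = fromBlocks X 0 0 Y}
  add_mem' := by
    rintro _ _ ⟨X₁, hX₁, Y₁, hY₁, rfl⟩ ⟨X₂, hX₂, Y₂, hY₂, rfl⟩
    exact ⟨X₁ + X₂, W.add_mem hX₁ hX₂, Y₁ + Y₂, Z.add_mem hY₁ hY₂, by simp [fromBlocks_add]⟩
  zero_mem' := ⟨0, W.zero_mem, 0, Z.zero_mem, by simp⟩
  smul_mem' := by
    rintro c _ ⟨X, hX, Y, hY, rfl⟩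
    exact ⟨c • X, W.smul_mem c hX, c • Y, Z.smul_mem c hY, by simp [fromBlocks_smul]⟩

variable {W : Submodule R (Matrix n l R)} {Z : Submodule R (Matrix o m R)}

theorem blockDiag_le_comap_toBlocks₁₁ₗ : blockDiag W Z ≤ W.comap toBlocks₁₁ₗ := by
  rintro _ ⟨X, hX, Y, -, rfl⟩
  simpa using hX

theorem blockDiag_le_comap_toBlocks₂₂ₗ : blockDiag W Z ≤ Z.comap toBlocks₂₂ₗ := by
  rintro _ ⟨X, -, Y, hY, rfl⟩
  simpa using hY

theorem HasSeparatingVector.of_le_blockDiag [Fintype l] [Fintype m]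
    {V : Submodule R (Matrix (n ⊕ o) (l ⊕ m) R)} (hV : V ≤ blockDiag W Z)
    (h₁ : (V.map toBlocks₁₁ₗ).HasSeparatingVector)
    (h₂ : ((V ⊓ LinearMap.ker toBlocks₁₁ₗ).map toBlocks₂₂ₗ).HasSeparatingVector) :
    V.HasSeparatingVector := by
  obtain ⟨v₁, hv₁⟩ := h₁
  obtain ⟨v₂, hv₂⟩ := h₂
  refine ⟨Sum.elim v₁ v₂, fun A hA hAv => ?_⟩
  obtain ⟨X, -, Y, -, rfl⟩ := hV hA
  rw [fromBlocks_zero_mulVec_sumElim] at hAv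
  obtain ⟨hXv, hYv⟩ := Sum.elim_eq_iff.1 (hAv.trans Sum.elim_zero_zero.symm)
  have hX : X = 0 := hv₁ X ⟨_, hA, toBlocks_fromBlocks₁₁ X 0 0 Y⟩ hXv
  subst hX
  have hAker : fromBlocks 0 0 0 Y ∈ V ⊓ LinearMap.ker toBlocks₁₁ₗ :=
    ⟨hA, toBlocks_fromBlocks₁₁ 0 0 0 Y⟩
  have hY : Y = 0 := hv₂ Y ⟨_, hAker, toBlocks_fromBlocks₂₂ 0 0 0 Y⟩ hYv
  simp [hY]

end Submodule

open Submodule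

theorem hasC1_iff_forall_le_hasSeparatingVector {m p : Type*} [Finite m] [Fintype p]
    (W : Submodule ℂ (Matrix m p ℂ)) :
    HasC1 (W : Set (Matrix m p ℂ)) ↔ ∀ V ≤ W, V.HasSeparatingVector := by
  constructor
  · intro hW V hVW
    let b := Module.finBasis ℂ V
    obtain ⟨v, hv⟩ := hW _ (fun i => b i) (fun i => hVW (b i).2)
      (b.linearIndependent.map' V.subtype V.ker_subtype)
    let f : V →ₗ[ℂ] m → ℂ := (mulVecBilin ℂ ℂ).flip v ∘ₗ V.subtype
    have hf : Function.Injective (b.constr ℂ fun i => f (b i)) :=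
      b.injective_constr_of_linearIndependent hv
    rw [b.constr_self] at hf
    refine ⟨v, fun A hA hAv => ?_⟩
    simpa using (injective_iff_map_eq_zero f).1 hf ⟨A, hA⟩ hAv
  · intro hW k X hX hXli
    obtain ⟨v, hv⟩ := hW (span ℂ (Set.range X)) (span_le.2 (Set.range_subset_iff.2 hX))
    exact ⟨v, hXli.map (f := (mulVecBilin ℂ ℂ).flip v) (disjoint_def.2 hv)⟩

/-- If subspaces `W ⊆ ℂ^{n×q}` and `Z ⊆ ℂ^{n'×q'}` both satisfy (C1), then the
block-diagonal direct sum `W ⊕ Z` inside `ℂ^{(n+n')×(q+q')}` satisfies (C1). -/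
theorem stmt7 {n q n' q' : ℕ}
    (W : Submodule ℂ (Matrix (Fin n) (Fin q) ℂ))
    (Z : Submodule ℂ (Matrix (Fin n') (Fin q') ℂ))
    (hW : HasC1 (W : Set (Matrix (Fin n) (Fin q) ℂ)))
    (hZ : HasC1 (Z : Set (Matrix (Fin n') (Fin q') ℂ))) :
    HasC1 {M : Matrix (Fin n ⊕ Fin n') (Fin q ⊕ Fin q') ℂ |
      ∃ X ∈ W, ∃ Y ∈ Z, M = Matrix.fromBlocks X 0 0 Y} := by
  rw [hasC1_iff_forall_le_hasSeparatingVector] at hW hZ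
  refine (hasC1_iff_forall_le_hasSeparatingVector (blockDiag W Z)).2 fun V hV => ?_
  refine HasSeparatingVector.of_le_blockDiag hV (hW _ ?_) (hZ _ ?_)
  · exact map_le_iff_le_comap.2 (hV.trans blockDiag_le_comap_toBlocks₁₁ₗ)
  · exact map_le_iff_le_comap.2 (inf_le_left.trans (hV.trans blockDiag_le_comap_toBlocks₂₂ₗ))
end

section
/- For any n×n complex matrix D, the bicommutant algebra {D}'' (all matrices commuting with every matrix that commutes with D) satisfies property (C1): for any linearly independent X_1,...,X_k in {D}'' there exists a vector v in C^n with X_1 v,...,X_k v linearly independent. -/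
open Matrix

/-- The bicommutant of `D` in `ℂ^{n×n}`. -/
def bicommutant {n : ℕ} (D : Matrix (Fin n) (Fin n) ℂ) : Set (Matrix (Fin n) (Fin n) ℂ) :=
  {X | ∀ C : Matrix (Fin n) (Fin n) ℂ, C * D = D * C → X * C = C * X}

/-!
Through `D`, `ℂⁿ` is a finitely generated torsion `ℂ[X]`-module, hence a finite direct sum of
cyclic modules `ℂ[X] ⧸ (pᵢ ^ eᵢ)`. Its module endomorphisms, which are exactly the elements of
the commutant `{D}'`, may multiply each summand by an arbitrary polynomial, so the sum `v` of
the generators satisfies `{D}' v = ℂⁿ`. An `X ∈ {D}''` with `X v = 0` then has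
`X (C v) = C (X v) = 0` for all `C ∈ {D}'`, so `X = 0`: the map `X ↦ X v` is injective on
`{D}''` and therefore preserves linear independence.
-/

section CyclicVector

open DirectSum

variable {R : Type*} [CommRing R]

theorem DirectSum.exists_surjective_apply_quotient {ι : Type*} [Fintype ι] [DecidableEq ι]
    (I : ι → Submodule R R) :
    ∃ v : ⨁ i, R ⧸ I i, Function.Surjective fun f : Module.End R (⨁ i, R ⧸ I i) => f v := by
  refine ⟨∑ i, of _ i (Submodule.Quotient.mk 1), fun w => ?_⟩
  choose g hg using fun i => Submodule.Quotient.mk_surjective _ (w i)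
  refine ⟨lmap fun i => g i • LinearMap.id, ?_⟩
  simp only [map_sum, lmap_of, LinearMap.smul_apply, LinearMap.id_apply,
    ← Submodule.Quotient.mk_smul, smul_eq_mul, mul_one, hg]
  exact sum_univ_of w

theorem exists_surjective_apply_of_linearEquiv {M N : Type*} [AddCommGroup M] [Module R M]
    [AddCommGroup N] [Module R N] (e : M ≃ₗ[R] N)
    (h : ∃ v : N, Function.Surjective fun f : Module.End R N => f v) :
    ∃ v : M, Function.Surjective fun f : Module.End R M => f v := by
  obtain ⟨v, hv⟩ := h
  refine ⟨e.symm v, fun w => ?_⟩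
  obtain ⟨f, hf⟩ := hv (e w)
  exact ⟨e.symm.toLinearMap ∘ₗ f ∘ₗ e.toLinearMap, by simp [hf]⟩

theorem Module.IsTorsion.exists_surjective_apply [IsDomain R] [IsPrincipalIdealRing R]
    {M : Type*} [AddCommGroup M] [Module R M] [Module.Finite R M] (hM : Module.IsTorsion R M) :
    ∃ v : M, Function.Surjective fun f : Module.End R M => f v := by
  classical
  obtain ⟨ι, _, p, -, e, ⟨φ⟩⟩ := Module.equiv_directSum_of_isTorsion hM
  exact exists_surjective_apply_of_linearEquiv φ (DirectSum.exists_surjective_apply_quotient _)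

end CyclicVector

theorem Module.End.exists_forall_exists_mem_centralizer_apply_eq {K V : Type*} [Field K]
    [AddCommGroup V] [Module K V] [FiniteDimensional K V] (φ : Module.End K V) :
    ∃ v : V, ∀ w : V, ∃ g ∈ Set.centralizer {φ}, g v = w := by
  let e := Module.AEval'.of φ
  obtain ⟨v, hv⟩ := (Module.AEval.isTorsion_of_finiteDimensional K V φ).exists_surjective_apply
  refine ⟨e.symm v, fun w => ?_⟩
  obtain ⟨f, hf⟩ := hv (e w)
  -- `K[X]`-linearity of `f` is exactly commutation with `φ`, the action of `X`.
  refine ⟨e.symm.toLinearMap ∘ₗ f.restrictScalars K ∘ₗ e.toLinearMap, ?_, by simp [hf]⟩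
  rw [Set.mem_centralizer_iff]
  rintro _ rfl
  ext x
  simp only [Module.End.mul_apply, LinearMap.comp_apply, LinearEquiv.coe_coe,
    LinearMap.coe_restrictScalars]
  rw [← Module.AEval'.of_symm_X_smul, ← map_smul, Module.AEval'.X_smul_of]

theorem Matrix.exists_forall_exists_mem_centralizer_mulVec_eq {K n : Type*} [Field K] [Fintype n]
    [DecidableEq n] (D : Matrix n n K) :
    ∃ v : n → K, ∀ w : n → K, ∃ C ∈ Set.centralizer {D}, C *ᵥ v = w := by
  obtain ⟨v, hv⟩ := Module.End.exists_forall_exists_mem_centralizer_apply_eq (toLinAlgEquiv' D)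
  refine ⟨v, fun w => ?_⟩
  obtain ⟨g, hg, rfl⟩ := hv w
  refine ⟨LinearMap.toMatrixAlgEquiv' g, ?_, by simp [← toLinAlgEquiv'_apply]⟩
  simp only [Set.mem_centralizer_iff, Set.mem_singleton_iff, forall_eq] at hg ⊢
  apply toLinAlgEquiv'.injective
  simpa only [map_mul, toLinAlgEquiv'_toMatrixAlgEquiv'] using hg

theorem Matrix.eq_zero_of_mem_centralizer_of_mulVec_eq_zero {R n : Type*} [Semiring R] [Fintype n]
    {S : Set (Matrix n n R)} {v : n → R} (hv : ∀ w, ∃ C ∈ S, C *ᵥ v = w)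
    {A : Matrix n n R} (hA : A ∈ Set.centralizer S) (hAv : A *ᵥ v = 0) : A = 0 := by
  refine ext_iff_mulVec.mpr fun w => ?_
  obtain ⟨C, hC, rfl⟩ := hv w
  rw [mulVec_mulVec, ← hA C hC, ← mulVec_mulVec, hAv, mulVec_zero, zero_mulVec]

theorem hasC1_of_mulVec_eq_zero {n q : Type*} [Fintype q] (W : Submodule ℂ (Matrix n q ℂ))
    (v : q → ℂ) (hv : ∀ A ∈ W, A *ᵥ v = 0 → A = 0) : HasC1 (W : Set (Matrix n q ℂ)) := by
  intro k X hXW hX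
  refine ⟨v, hX.map (f := (mulVecBilin ℂ ℂ).flip v) ?_⟩
  rw [Submodule.disjoint_def]
  intro A hA hAv
  exact hv A (Submodule.span_le.mpr (Set.range_subset_iff.mpr hXW) hA) hAv

theorem bicommutant_eq_centralizer_centralizer {n : ℕ} (D : Matrix (Fin n) (Fin n) ℂ) :
    bicommutant D = Set.centralizer (Set.centralizer {D}) := by
  ext X
  simp only [bicommutant, Set.mem_ofPred_eq, Set.mem_centralizer_iff, Set.mem_singleton_iff,
    forall_eq]
  exact forall_congr' fun C => ⟨fun h hC => (h hC.symm).symm, fun h hC => (h hC.symm).symm⟩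

/-- For any `D ∈ ℂ^{n×n}`, the bicommutant `{D}''` satisfies property (C1). -/
theorem stmt10 {n : ℕ} (D : Matrix (Fin n) (Fin n) ℂ) :
    HasC1 (bicommutant D) := by
  obtain ⟨v, hv⟩ := D.exists_forall_exists_mem_centralizer_mulVec_eq
  rw [bicommutant_eq_centralizer_centralizer]
  exact hasC1_of_mulVec_eq_zero (Subalgebra.centralizer ℂ (Set.centralizer {D})).toSubmodule v
    fun A hA => eq_zero_of_mem_centralizer_of_mulVec_eq_zero hv hA
end

section
/- Let A be an n×n matrix that is Lyapunov regular and let B be in the bicommutant {A}''. Then the matricization L_{A,B} = L_B L_A^{-1} of the map L_{A,B} lies in the tensor algebra \overline{{A*}''} ⊗ {A*}'', where L_A = A^T ⊗ I_n + I_n ⊗ A* and L_B = B^T ⊗ I_n + I_n ⊗ B*. -/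
open Matrix Kronecker Pointwise

set_option synthInstance.maxHeartbeats 1000000 in
lemma inv_mem_subalgebra {m : Type*} [Fintype m] [DecidableEq m]
    (S : Subalgebra ℂ (Matrix m m ℂ)) {x : Matrix m m ℂ} (hx : x ∈ S) : x⁻¹ ∈ S := by
  by_cases h : IsUnit x.det
  · have hu : IsUnit x := (Matrix.isUnit_iff_isUnit_det _).2 h
    have hinj : Function.Injective (LinearMap.mulLeft ℂ (⟨x, hx⟩ : S)) := by
      intro y z hyz
      have h2 : x * (y : Matrix m m ℂ) = x * (z : Matrix m m ℂ) := congrArg Subtype.val hyz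
      exact Subtype.ext (hu.mul_left_cancel h2)
    have hsurj := (LinearMap.injective_iff_surjective (f := LinearMap.mulLeft ℂ (⟨x, hx⟩ : S))).1 hinj
    obtain ⟨y, hy⟩ := hsurj 1
    have hxy : x * (y : Matrix m m ℂ) = 1 := congrArg Subtype.val hy
    rw [Matrix.inv_eq_right_inv hxy]
    exact y.2
  · rw [Matrix.nonsing_inv_apply_not_isUnit _ h]
    exact zero_mem S

/-- For `A` Lyapunov regular and `B` in the bicommutant `{A}''`, the
matricization `L_{A,B} = L_B L_A⁻¹`, with `L_A = Aᵀ ⊗ I + I ⊗ Aᴴ` and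
`L_B = Bᵀ ⊗ I + I ⊗ Bᴴ`, lies in the tensor algebra
`conj({A*}'') ⊗ {A*}''`. -/
theorem stmt11 {n : ℕ} (A B : Matrix (Fin n) (Fin n) ℂ)
    (hreg : ∀ μ ∈ spectrum ℂ A, ∀ ν ∈ spectrum ℂ A, μ + starRingEnd ℂ ν ≠ 0)
    (hB : B ∈ bicommutant A) :
    (Bᵀ ⊗ₖ (1 : Matrix (Fin n) (Fin n) ℂ) + (1 : Matrix (Fin n) (Fin n) ℂ) ⊗ₖ Bᴴ) *
      (Aᵀ ⊗ₖ (1 : Matrix (Fin n) (Fin n) ℂ) + (1 : Matrix (Fin n) (Fin n) ℂ) ⊗ₖ Aᴴ)⁻¹ ∈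
    Submodule.span ℂ {Z : Matrix (Fin n × Fin n) (Fin n × Fin n) ℂ |
      ∃ X ∈ bicommutant Aᴴ, ∃ Y ∈ bicommutant Aᴴ,
        Z = (X.map (starRingEnd ℂ)) ⊗ₖ Y} := by
  set s : Set (Matrix (Fin n × Fin n) (Fin n × Fin n) ℂ) :=
    {Z | ∃ X ∈ bicommutant Aᴴ, ∃ Y ∈ bicommutant Aᴴ, Z = (X.map (starRingEnd ℂ)) ⊗ₖ Y} with hs
  -- basic facts about the bicommutant
  have hone : (1 : Matrix (Fin n) (Fin n) ℂ) ∈ bicommutant Aᴴ := fun C _ => by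
    rw [one_mul, mul_one]
  have hAH : Aᴴ ∈ bicommutant Aᴴ := fun C hC => hC.symm
  have hBH : Bᴴ ∈ bicommutant Aᴴ := by
    intro C hC
    have h1 : Cᴴ * A = A * Cᴴ := by
      have := congrArg Matrix.conjTranspose hC
      simpa [Matrix.conjTranspose_mul] using this.symm
    have h2 : B * Cᴴ = Cᴴ * B := hB Cᴴ h1
    have := congrArg Matrix.conjTranspose h2
    simpa [Matrix.conjTranspose_mul] using this.symm
  have hmap_one : ((1 : Matrix (Fin n) (Fin n) ℂ).map (starRingEnd ℂ)) = 1 := by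
    ext i j
    by_cases hij : i = j <;> simp [Matrix.map_apply, Matrix.one_apply, hij]
  have hmapT : ∀ M : Matrix (Fin n) (Fin n) ℂ, (Mᴴ.map (starRingEnd ℂ)) = Mᵀ := by
    intro M
    ext i j
    simp [Matrix.map_apply, Matrix.conjTranspose_apply, Matrix.transpose_apply]
  -- membership of the generators
  have hmem : ∀ M : Matrix (Fin n) (Fin n) ℂ, Mᴴ ∈ bicommutant Aᴴ →
      Mᵀ ⊗ₖ (1 : Matrix (Fin n) (Fin n) ℂ) ∈ s ∧
      (1 : Matrix (Fin n) (Fin n) ℂ) ⊗ₖ Mᴴ ∈ s := by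
    intro M hM
    constructor
    · exact ⟨Mᴴ, hM, 1, hone, by rw [hmapT]⟩
    · exact ⟨1, hone, Mᴴ, hM, by rw [hmap_one]⟩
  -- the span is a subalgebra
  have h1s : (1 : Matrix (Fin n × Fin n) (Fin n × Fin n) ℂ) ∈ Submodule.span ℂ s := by
    refine Submodule.subset_span ⟨1, hone, 1, hone, ?_⟩
    rw [hmap_one, Matrix.one_kronecker_one]
  have hmuls : ∀ x y : Matrix (Fin n × Fin n) (Fin n × Fin n) ℂ, x ∈ Submodule.span ℂ s →
      y ∈ Submodule.span ℂ s → x * y ∈ Submodule.span ℂ s := by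
    intro x y hx hy
    have hss : s * s ⊆ s := by
      rintro z ⟨a, ha, b, hb, rfl⟩
      obtain ⟨X1, hX1, Y1, hY1, rfl⟩ := ha
      obtain ⟨X2, hX2, Y2, hY2, rfl⟩ := hb
      refine ⟨X1 * X2, fun C hC => by rw [mul_assoc, hX2 C hC, ← mul_assoc, hX1 C hC, mul_assoc],
        Y1 * Y2, fun C hC => by rw [mul_assoc, hY2 C hC, ← mul_assoc, hY1 C hC, mul_assoc], ?_⟩
      rw [Matrix.map_mul, Matrix.mul_kronecker_mul]
    have := Submodule.mul_mem_mul hx hy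
    rw [Submodule.span_mul_span] at this
    exact Submodule.span_mono hss this
  let T : Subalgebra ℂ (Matrix (Fin n × Fin n) (Fin n × Fin n) ℂ) :=
    (Submodule.span ℂ s).toSubalgebra h1s hmuls
  have hLB : (Bᵀ ⊗ₖ (1 : Matrix (Fin n) (Fin n) ℂ) + (1 : Matrix (Fin n) (Fin n) ℂ) ⊗ₖ Bᴴ) ∈ T :=
    Submodule.mem_toSubalgebra.2 ((Submodule.span ℂ s).add_mem
      (Submodule.subset_span (hmem B hBH).1) (Submodule.subset_span (hmem B hBH).2))
  have hLA : (Aᵀ ⊗ₖ (1 : Matrix (Fin n) (Fin n) ℂ) + (1 : Matrix (Fin n) (Fin n) ℂ) ⊗ₖ Aᴴ) ∈ T :=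
    Submodule.mem_toSubalgebra.2 ((Submodule.span ℂ s).add_mem
      (Submodule.subset_span (hmem A hAH).1) (Submodule.subset_span (hmem A hAH).2))
  exact Submodule.mem_toSubalgebra.1 (T.mul_mem hLB (inv_mem_subalgebra T hLA))
end

section
/- Under the assumptions of the skew-intersection lemma, with H_{A,B} positive definite factored as P*P, defining L_R = [R; (P⊗R)C] and M_R = [RB; −(P⊗RA)C] for each R in C^{n×n}, one has M_{R'}* L_R = −L_{R'}* M_R for all R, R' in C^{n×n}. -/
open Matrix Kronecker
open scoped ComplexOrder

/-!
Both sides are Gram-type products of the block columns, and `(P ⊗ X) bC` pairs with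
`(P ⊗ Y) bC` to `bCᴴ (Pᴴ P ⊗ Xᴴ Y) bC = bCᴴ (H ⊗ Xᴴ Y) bC`. With `X = R'ᴴ R` the difference
of the two sides is therefore `X B + Bᴴ X - bCᴴ (H ⊗ (X A + Aᴴ X)) bC`, which vanishes by the
Hill representation.
-/

section

variable {α l m n p q : Type*} [Fintype l] [Fintype m]

theorem conjTranspose_fromRows_mul_fromRows [Semiring α] [Star α]
    (X₁ : Matrix m n α) (X₂ : Matrix l n α) (Y₁ : Matrix m q α) (Y₂ : Matrix l q α) :
    (fromRows X₁ X₂)ᴴ * fromRows Y₁ Y₂ = X₁ᴴ * Y₁ + X₂ᴴ * Y₂ := by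
  rw [conjTranspose_fromRows_eq_fromCols_conjTranspose, fromCols_mul_fromRows]

theorem conjTranspose_kronecker_mul_mul_kronecker_mul [CommSemiring α] [StarRing α]
    [Fintype n] [Fintype p] (P : Matrix l m α) (X Y : Matrix n p α) (C : Matrix (m × p) q α) :
    ((P ⊗ₖ X) * C)ᴴ * ((P ⊗ₖ Y) * C) = Cᴴ * ((Pᴴ * P) ⊗ₖ (Xᴴ * Y)) * C := by
  rw [conjTranspose_mul, conjTranspose_kronecker, mul_kronecker_mul]
  simp only [Matrix.mul_assoc]

end

theorem stmt13_general {n m : ℕ} (A B : Matrix (Fin n) (Fin n) ℂ)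
    (H P : Matrix (Fin m) (Fin m) ℂ) (hfac : H = Pᴴ * P)
    (bC : Matrix (Fin m × Fin n) (Fin n) ℂ)
    (hHill : ∀ X : Matrix (Fin n) (Fin n) ℂ,
      X * B + Bᴴ * X = bCᴴ * (H ⊗ₖ (X * A + Aᴴ * X)) * bC) :
    ∀ R R' : Matrix (Fin n) (Fin n) ℂ,
      (Matrix.fromRows (R' * B) (-((P ⊗ₖ (R' * A)) * bC)))ᴴ *
          Matrix.fromRows R ((P ⊗ₖ R) * bC) =
        -((Matrix.fromRows R' ((P ⊗ₖ R') * bC))ᴴ *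
          Matrix.fromRows (R * B) (-((P ⊗ₖ (R * A)) * bC))) := by
  intro R R'
  rw [conjTranspose_fromRows_mul_fromRows, conjTranspose_fromRows_mul_fromRows, conjTranspose_neg,
    Matrix.neg_mul, Matrix.mul_neg, conjTranspose_kronecker_mul_mul_kronecker_mul,
    conjTranspose_kronecker_mul_mul_kronecker_mul, ← hfac]
  have hill := hHill (R'ᴴ * R)
  simp only [kronecker_add, Matrix.mul_add, Matrix.add_mul, conjTranspose_mul, Matrix.mul_assoc]
    at hill ⊢
  linear_combination (norm := noncomm_ring) hill

/-- Skew-intersection lemma: with `A` Lyapunov regular, a Hill representation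
of `L_{A,B}` with positive definite Hill matrix `H = Pᴴ P` (written with the
stacked block column `bC` of the Hill matrices, so that
`X*B + Bᴴ*X = bCᴴ (H ⊗ (X*A + Aᴴ*X)) bC`), defining
`L_R = [R; (P ⊗ R) bC]` and `M_R = [R B; −(P ⊗ R A) bC]`, one has
`M_{R'}ᴴ L_R = −L_{R'}ᴴ M_R` for all `R, R'`. -/
theorem stmt13 {n m : ℕ} (A B : Matrix (Fin n) (Fin n) ℂ)
    (hreg : ∀ μ ∈ spectrum ℂ A, ∀ ν ∈ spectrum ℂ A, μ + starRingEnd ℂ ν ≠ 0)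
    (H P : Matrix (Fin m) (Fin m) ℂ) (hPD : H.PosDef) (hfac : H = Pᴴ * P)
    (bC : Matrix (Fin m × Fin n) (Fin n) ℂ)
    (hHill : ∀ X : Matrix (Fin n) (Fin n) ℂ,
      X * B + Bᴴ * X = bCᴴ * (H ⊗ₖ (X * A + Aᴴ * X)) * bC) :
    ∀ R R' : Matrix (Fin n) (Fin n) ℂ,
      (Matrix.fromRows (R' * B) (-((P ⊗ₖ (R' * A)) * bC)))ᴴ *
          Matrix.fromRows R ((P ⊗ₖ R) * bC) =
        -((Matrix.fromRows R' ((P ⊗ₖ R') * bC))ᴴ *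
          Matrix.fromRows (R * B) (-((P ⊗ₖ (R * A)) * bC))) :=
  stmt13_general A B H P hfac bC hHill
end

section
/- Let A be Lyapunov regular, B in C_L(A) ∩ {A}'', and suppose the matrices C_1,...,C_m of a minimal Hill representation of L_{A,B} together with the identity span the bicommutant {A*}'' (i.e., span{C_1,...,C_m, I_n} = {A*}''). Then ker L_𝐑 ⊆ ker M_𝐑 for every finite collection 𝐑 ⊂ C^{n×n}, where L_𝐑 and M_𝐑 are the block-row concatenations of L_{R_j} = [R_j; (P⊗R_j)C] and M_{R_j} = [R_j B; −(P⊗R_j A)C]. -/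
open Matrix Kronecker
open scoped ComplexOrder

/-- Suboptimality lemma: if `A` is Lyapunov regular, `B ∈ C_L(A) ∩ {A}''`, the
Hill matrices `C_1, ..., C_m` lie in `{A*}''` and together with `I_n` span
`{A*}''`, and `P` is invertible, then `ker L_𝐑 ⊆ ker M_𝐑` for every finite
collection `𝐑`, where `L_R = [R; (P⊗R)bC]`, `M_R = [R B; −(P⊗(R A))bC]` and
`bC` is the block column stacking of the `C_kᴴ`. -/
theorem stmt16 {n m : ℕ} (A B : Matrix (Fin n) (Fin n) ℂ)
    (hreg : ∀ μ ∈ spectrum ℂ A, ∀ ν ∈ spectrum ℂ A, μ + starRingEnd ℂ ν ≠ 0)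
    (hBbicomm : B ∈ bicommutant A)
    (hBdom : ∀ Hm : Matrix (Fin n) (Fin n) ℂ, Hm.IsHermitian →
      (Hm * A + Aᴴ * Hm).PosSemidef → (Hm * B + Bᴴ * Hm).PosSemidef)
    (C : Fin m → Matrix (Fin n) (Fin n) ℂ)
    (hC : ∀ k, C k ∈ bicommutant Aᴴ)
    (hspan : (Submodule.span ℂ
        (insert (1 : Matrix (Fin n) (Fin n) ℂ) (Set.range C)) :
        Set (Matrix (Fin n) (Fin n) ℂ)) = bicommutant Aᴴ)
    (P : Matrix (Fin m) (Fin m) ℂ) (hP : IsUnit P) :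
    ∀ (k : ℕ) (R : Fin k → Matrix (Fin n) (Fin n) ℂ) (v : Fin k × Fin n → ℂ),
      (fun (a : Fin n ⊕ Fin m × Fin n) (p : Fin k × Fin n) =>
          (Matrix.fromRows (R p.1)
            ((P ⊗ₖ R p.1) * (Matrix.of fun (s : Fin m × Fin n) (j : Fin n) => (C s.1)ᴴ s.2 j))) a p.2)
          *ᵥ v = 0 →
      (fun (a : Fin n ⊕ Fin m × Fin n) (p : Fin k × Fin n) =>
          (Matrix.fromRows (R p.1 * B)
            (-((P ⊗ₖ (R p.1 * A)) * (Matrix.of fun (s : Fin m × Fin n) (j : Fin n) => (C s.1)ᴴ s.2 j)))) a p.2)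
          *ᵥ v = 0 := by
  intro k R v hL
  classical
  set bC : Matrix (Fin m × Fin n) (Fin n) ℂ :=
    Matrix.of fun (s : Fin m × Fin n) (j : Fin n) => (C s.1)ᴴ s.2 j with hbC
  set S : Matrix (Fin n) (Fin n) ℂ → Fin n → ℂ :=
    fun X i => ∑ p : Fin k × Fin n, (R p.1 * X) i p.2 * v p with hSdef
  -- inner kronecker expansion
  have inner : ∀ (X : Matrix (Fin n) (Fin n) ℂ) (q : Fin m × Fin n) (i : Fin n),
      ((P ⊗ₖ X) * bC) q i = ∑ l, P q.1 l * (X * (C l)ᴴ) q.2 i := by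
    intro X q i
    simp [Matrix.mul_apply, Fintype.sum_prod_type, Finset.mul_sum, mul_assoc, hbC]
  have key2 : ∀ (T : Fin k → Matrix (Fin n) (Fin n) ℂ) (q : Fin m × Fin n),
      (∑ p : Fin k × Fin n, ((P ⊗ₖ T p.1) * bC) q p.2 * v p)
        = ∑ l, P q.1 l * ∑ p : Fin k × Fin n, (T p.1 * (C l)ᴴ) q.2 p.2 * v p := by
    intro T q
    simp only [inner, Finset.sum_mul]
    rw [Finset.sum_comm]
    simp [Finset.mul_sum, mul_assoc]
  -- top hypothesis
  have htop : ∀ i, S 1 i = 0 := by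
    intro i
    have h := congrFun hL (Sum.inl i)
    simpa [Matrix.mulVec, dotProduct, hSdef] using h
  -- bottom hypothesis, after inverting P
  have hbot : ∀ q : Fin m × Fin n, ∑ l, P q.1 l * S (C l)ᴴ q.2 = 0 := by
    intro q
    have h := congrFun hL (Sum.inr q)
    simp only [Matrix.mulVec, dotProduct, Matrix.fromRows_apply_inr, Pi.zero_apply] at h
    rw [key2 R q] at h
    exact h
  have hx : ∀ l i, S (C l)ᴴ i = 0 := by
    intro l i
    set X : Matrix (Fin m) (Fin n) ℂ := Matrix.of fun l i => S (C l)ᴴ i with hX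
    have hPX : P * X = 0 := by
      ext a b
      simpa [Matrix.mul_apply, hX] using hbot (a, b)
    have hX0 : X = 0 := by
      calc X = (P⁻¹ * P) * X := by
              rw [Matrix.nonsing_inv_mul _ ((Matrix.isUnit_iff_isUnit_det P).mp hP), Matrix.one_mul]
        _ = P⁻¹ * (P * X) := by rw [Matrix.mul_assoc]
        _ = 0 := by rw [hPX, Matrix.mul_zero]
    have := congrFun (congrFun hX0 l) i
    simpa [hX] using this
  -- the vanishing set is a submodule
  have Sadd : ∀ X Y : Matrix (Fin n) (Fin n) ℂ, ∀ i, S (X + Y) i = S X i + S Y i := by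
    intro X Y i
    simp [hSdef, Matrix.mul_add, Matrix.add_apply, add_mul, Finset.sum_add_distrib]
  have Ssmul : ∀ (c : ℂ) (X : Matrix (Fin n) (Fin n) ℂ), ∀ i, S (c • X) i = c * S X i := by
    intro c X i
    simp [hSdef, Matrix.mul_smul, Finset.mul_sum, mul_assoc]
  set Z : Submodule ℂ (Matrix (Fin n) (Fin n) ℂ) :=
    { carrier := {Y | ∀ i, S Yᴴ i = 0}
      add_mem' := by
        intro a b ha hb i
        rw [Matrix.conjTranspose_add, Sadd, ha i, hb i, add_zero]
      zero_mem' := by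
        intro i
        simp [hSdef]
      smul_mem' := by
        intro c Y hY i
        rw [Matrix.conjTranspose_smul, Ssmul, hY i, mul_zero] } with hZ
  have hZspan : ∀ X ∈ bicommutant Aᴴ, ∀ i, S Xᴴ i = 0 := by
    intro X hXmem
    have hsub : insert (1 : Matrix (Fin n) (Fin n) ℂ) (Set.range C) ⊆ Z := by
      rintro Y (rfl | ⟨l, rfl⟩)
      · intro i; simpa using htop i
      · intro i; exact hx l i
    have hmem : X ∈ Submodule.span ℂ (insert (1 : Matrix (Fin n) (Fin n) ℂ) (Set.range C)) := by
      rw [← SetLike.mem_coe, hspan]; exact hXmem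
    exact (Submodule.span_le.mpr hsub) hmem
  -- algebra facts
  have hmul : ∀ X Y : Matrix (Fin n) (Fin n) ℂ, X ∈ bicommutant Aᴴ → Y ∈ bicommutant Aᴴ →
      X * Y ∈ bicommutant Aᴴ := by
    intro X Y hXm hYm D hD
    rw [Matrix.mul_assoc, hYm D hD, ← Matrix.mul_assoc, hXm D hD, Matrix.mul_assoc]
  have hAH : Aᴴ ∈ bicommutant Aᴴ := fun D hD => hD.symm
  have hBH : Bᴴ ∈ bicommutant Aᴴ := by
    intro D hD
    have h1 : Dᴴ * A = A * Dᴴ := by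
      have := congrArg Matrix.conjTranspose hD
      simpa [Matrix.conjTranspose_mul] using this.symm
    have h2 := hBbicomm Dᴴ h1
    have := congrArg Matrix.conjTranspose h2
    simpa [Matrix.conjTranspose_mul] using this.symm
  have hSB : ∀ i, S B i = 0 := by
    intro i
    have := hZspan Bᴴ hBH i
    simpa using this
  have hSA : ∀ l i, S (A * (C l)ᴴ) i = 0 := by
    intro l i
    have := hZspan (C l * Aᴴ) (hmul _ _ (hC l) hAH) i
    simpa [Matrix.conjTranspose_mul] using this
  -- conclude
  funext a
  match a with
  | Sum.inl i =>
    show (∑ p : Fin k × Fin n, (R p.1 * B) i p.2 * v p) = _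
    simpa [hSdef] using hSB i
  | Sum.inr q =>
    show (∑ p : Fin k × Fin n, (-((P ⊗ₖ (R p.1 * A)) * bC)) q p.2 * v p) = _
    have : (∑ p : Fin k × Fin n, ((P ⊗ₖ (R p.1 * A)) * bC) q p.2 * v p) = 0 := by
      rw [key2 (fun j => R j * A) q]
      have : ∀ l, (∑ p : Fin k × Fin n, ((R p.1 * A) * (C l)ᴴ) q.2 p.2 * v p) = 0 := by
        intro l
        have := hSA l q.2
        simpa [hSdef, Matrix.mul_assoc] using this
      simp [this]
    simpa [Finset.sum_neg_distrib, neg_mul] using this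
end

section
/- If Ŝ is a matrix on C^{(m+1)n} satisfying Ŝ L_R = M_R for all R in C^{n×n}, with Ŝ vanishing on U^⊥ where U = span{L_R x}, and the families satisfy the skew relations M_{R'}* L_R = −L_{R'}* M_R and the intertwining L_{R'R} = (I_{m+1}⊗R')L_R, M_{R'R} = (I_{m+1}⊗R')M_R, then the compression of Ŝ to U is skew-Hermitian and commutes with (I_{m+1}⊗R)|_U for every R; consequently Ŝ can be modified on U^⊥ so that Ŝ = S ⊗ I_n for some skew-Hermitian S in C^{(m+1)×(m+1)} while still satisfying Ŝ L_R = M_R for all R. -/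
/-!
Let `P` be the orthogonal projection onto `U`. Both `U` and `U^⊥` are invariant under every
`1 ⊗ R` (the family is closed under `ᴴ`), so `P` commutes with all `1 ⊗ R`; so does `Ŝ`, which
vanishes on `U^⊥` and, by the intertwining relations, commutes with `1 ⊗ R` on `U`. The skew
relations make the compression `P Ŝ P` skew-Hermitian, hence `Ŝ - Ŝᴴ (1 - P)` is skew-Hermitian,
agrees with `Ŝ` on `U` and commutes with all `1 ⊗ R`. Testing against matrix units shows that
this commutant consists of the matrices `S ⊗ 1`.
-/

open Matrix Kronecker

open scoped ComplexOrder

theorem sub_star_mul_one_sub_mem_skewAdjoint {R : Type*} [Ring R] [StarRing R] {p x : R}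
    (hp : IsSelfAdjoint p) (hx : x * p = x) (h : p * (x + star x) * p = 0) :
    x - star x * (1 - p) ∈ skewAdjoint R := by
  have hx' : p * star x = star x := by simpa [hp.star_eq] using congr_arg star hx
  have hpx : p * x = -(star x * p) :=
    calc p * x = p * x * p := by rw [mul_assoc, hx]
      _ = -(p * star x * p) := eq_neg_of_add_eq_zero_left (by rwa [← add_mul, ← mul_add])
      _ = -(star x * p) := by rw [hx']
  rw [skewAdjoint.mem_iff]
  simp only [star_sub, star_mul, star_star, hp.star_eq, mul_sub, mul_one, hpx]
  abel

namespace Matrix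

variable {𝕜 : Type*} [RCLike 𝕜]

section DotProduct

variable {m n : Type*} [Fintype m] [Fintype n]

theorem star_dotProduct_mulVec_eq (X : Matrix m n 𝕜) (u : m → 𝕜) (v : n → 𝕜) :
    star u ⬝ᵥ (X *ᵥ v) = star (Xᴴ *ᵥ u) ⬝ᵥ v := by
  rw [star_mulVec, conjTranspose_conjTranspose, dotProduct_mulVec]

theorem eq_zero_of_forall_star_dotProduct_mulVec [DecidableEq m] [DecidableEq n]
    {X : Matrix m n 𝕜} (h : ∀ u v, star u ⬝ᵥ (X *ᵥ v) = 0) : X = 0 := by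
  ext i j
  simpa [mulVec_single_one, dotProduct, Pi.single_apply] using h (Pi.single i 1) (Pi.single j 1)

theorem star_dotProduct_mulVec_eq_zero_of_mem_span {G : Set (m → 𝕜)} {Y : Matrix m m 𝕜}
    (h : ∀ u ∈ G, ∀ v ∈ G, star u ⬝ᵥ (Y *ᵥ v) = 0) {u v : m → 𝕜}
    (hu : u ∈ Submodule.span 𝕜 G) (hv : v ∈ Submodule.span 𝕜 G) :
    star u ⬝ᵥ (Y *ᵥ v) = 0 := by
  induction hu, hv using Submodule.span_induction₂ with
  | mem_mem u v hu hv => exact h u hu v hv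
  | zero_left => simp
  | zero_right => simp
  | add_left => simp_all [add_dotProduct]
  | add_right => simp_all [mulVec_add]
  | smul_left => simp_all [star_smul]
  | smul_right => simp_all [mulVec_smul]

end DotProduct

section Projection

variable {ι : Type*} [Fintype ι]

structure IsOrthogonalProjection (U : Submodule 𝕜 (ι → 𝕜)) (P : Matrix ι ι 𝕜) : Prop where
  isHermitian : P.IsHermitian
  mulVec_mem : ∀ v, P *ᵥ v ∈ U
  mulVec_eq_self : ∀ v ∈ U, P *ᵥ v = v

theorem exists_isOrthogonalProjection [DecidableEq ι] (U : Submodule 𝕜 (ι → 𝕜)) :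
    ∃ P : Matrix ι ι 𝕜, IsOrthogonalProjection U P := by
  let K : Submodule 𝕜 (EuclideanSpace 𝕜 ι) :=
    U.comap (WithLp.linearEquiv 2 𝕜 (ι → 𝕜)).toLinearMap
  let P := toEuclideanLin.symm K.starProjection.toLinearMap
  have hP : ∀ v, P *ᵥ v = (K.starProjection (WithLp.toLp 2 v)).ofLp := fun v => by
    change (toEuclideanLin P (WithLp.toLp 2 v)).ofLp = _
    simp [P]
  refine ⟨P, ⟨?_, fun v => ?_, fun v hv => ?_⟩⟩
  · exact isSymmetric_toEuclideanLin_iff.mp (by simpa [P] using K.starProjection_isSymmetric)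
  · rw [hP]; exact K.starProjection_apply_mem _
  · rw [hP, Submodule.starProjection_eq_self_iff.mpr (by exact hv)]

namespace IsOrthogonalProjection

variable {U : Submodule 𝕜 (ι → 𝕜)} {P : Matrix ι ι 𝕜}

theorem star_dotProduct_sub_mulVec (hP : IsOrthogonalProjection U P) {u : ι → 𝕜} (hu : u ∈ U)
    (v : ι → 𝕜) : star u ⬝ᵥ (v - P *ᵥ v) = 0 := by
  rw [dotProduct_sub, star_dotProduct_mulVec_eq, hP.isHermitian.eq, hP.mulVec_eq_self u hu,
    sub_self]

theorem mulVec_eq_zero (hP : IsOrthogonalProjection U P) {w : ι → 𝕜}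
    (hw : ∀ u ∈ U, star u ⬝ᵥ w = 0) : P *ᵥ w = 0 := by
  have h := hP.star_dotProduct_sub_mulVec (hP.mulVec_mem w) w
  rwa [dotProduct_sub, hw _ (hP.mulVec_mem w), zero_sub, neg_eq_zero,
    dotProduct_star_self_eq_zero] at h

theorem mul_eq_of_forall_mulVec_eq_zero {m : Type*} (hP : IsOrthogonalProjection U P)
    {X : Matrix m ι 𝕜} (hX : ∀ w, (∀ u ∈ U, star u ⬝ᵥ w = 0) → X *ᵥ w = 0) : X * P = X := by
  refine ext_iff_mulVec.mpr fun v => ?_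
  rw [← mulVec_mulVec, eq_comm, ← sub_eq_zero, ← mulVec_sub]
  exact hX _ fun u hu => hP.star_dotProduct_sub_mulVec hu v

theorem commute_of_forall_mulVec_eq (hP : IsOrthogonalProjection U P) {X Q : Matrix ι ι 𝕜}
    (hQH : ∀ u ∈ U, Qᴴ *ᵥ u ∈ U)
    (hX : ∀ w, (∀ u ∈ U, star u ⬝ᵥ w = 0) → X *ᵥ w = 0)
    (hXQ : ∀ u ∈ U, X *ᵥ (Q *ᵥ u) = Q *ᵥ (X *ᵥ u)) : Commute X Q := by
  refine ext_iff_mulVec.mpr fun v => ?_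
  have hw : ∀ u ∈ U, star u ⬝ᵥ (v - P *ᵥ v) = 0 := fun u hu => hP.star_dotProduct_sub_mulVec hu v
  have hQw : ∀ u ∈ U, star u ⬝ᵥ (Q *ᵥ (v - P *ᵥ v)) = 0 := fun u hu => by
    rw [star_dotProduct_mulVec_eq]; exact hw _ (hQH u hu)
  calc (X * Q) *ᵥ v = X *ᵥ (Q *ᵥ (P *ᵥ v)) + X *ᵥ (Q *ᵥ (v - P *ᵥ v)) := by
        rw [← mulVec_add, ← mulVec_add, add_sub_cancel, mulVec_mulVec]
    _ = Q *ᵥ (X *ᵥ (P *ᵥ v)) + Q *ᵥ (X *ᵥ (v - P *ᵥ v)) := by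
        rw [hXQ _ (hP.mulVec_mem v), hX _ hQw, hX _ hw, mulVec_zero]
    _ = (Q * X) *ᵥ v := by rw [← mulVec_add, ← mulVec_add, add_sub_cancel, mulVec_mulVec]

end IsOrthogonalProjection

end Projection

section Kronecker

variable {ι κ : Type*} [Fintype ι] [DecidableEq ι] [Fintype κ] [DecidableEq κ]

theorem exists_eq_kronecker_one_of_forall_commute {R : Type*} [CommSemiring R]
    (A : Matrix (ι × κ) (ι × κ) R) (hA : ∀ B : Matrix κ κ R, Commute A (1 ⊗ₖ B)) :
    ∃ S : Matrix ι ι R, A = S ⊗ₖ 1 := by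
  cases isEmpty_or_nonempty κ with
  | inl _ => exact ⟨0, Subsingleton.elim _ _⟩
  | inr _ =>
    obtain ⟨z⟩ := ‹Nonempty κ›
    have key : ∀ i j a b k l, (if l = b then A (i, a) (j, k) else 0) =
        if k = a then A (i, l) (j, b) else 0 := fun i j a b k l => by
      simpa [mul_apply, kronecker_apply, one_apply, single, Fintype.sum_prod_type,
        ite_and, mul_comm] using congr_fun₂ (hA (single k l 1)).eq (i, a) (j, b)
    refine ⟨of fun i j => A (i, z) (j, z), ?_⟩
    ext ⟨i, a⟩ ⟨j, b⟩
    rw [kronecker_apply, one_apply, of_apply]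
    split_ifs with hab
    · subst hab; simpa using key i j a z a z
    · simpa [hab, Ne.symm hab] using key i j a b b b

theorem exists_skewHermitian_eq_kronecker_one (A : Matrix (ι × κ) (ι × κ) 𝕜) (hskew : Aᴴ = -A)
    (hA : ∀ B : Matrix κ κ 𝕜, Commute A (1 ⊗ₖ B)) :
    ∃ S : Matrix ι ι 𝕜, Sᴴ = -S ∧ A = S ⊗ₖ 1 := by
  obtain ⟨S, rfl⟩ := exists_eq_kronecker_one_of_forall_commute A hA
  have hSH : Sᴴ ⊗ₖ (1 : Matrix κ κ 𝕜) = -(S ⊗ₖ 1) := by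
    rw [← hskew, conjTranspose_kronecker, conjTranspose_one]
  have hsub : (S - Sᴴ) ⊗ₖ (1 : Matrix κ κ 𝕜) = S ⊗ₖ 1 - Sᴴ ⊗ₖ 1 := by
    ext; simp [sub_mul]
  refine ⟨(2⁻¹ : 𝕜) • (S - Sᴴ), by simp [conjTranspose_smul, smul_sub], ?_⟩
  rw [smul_kronecker, hsub, hSH, sub_neg_eq_add, ← two_smul 𝕜, smul_smul,
    inv_mul_cancel₀ two_ne_zero, one_smul]

theorem exists_skewHermitian_kronecker_one_mulVec_eq {U : Submodule 𝕜 (ι × κ → 𝕜)}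
    {X : Matrix (ι × κ) (ι × κ) 𝕜} (hU : ∀ (B : Matrix κ κ 𝕜), ∀ u ∈ U, (1 ⊗ₖ B) *ᵥ u ∈ U)
    (hX : ∀ w, (∀ u ∈ U, star u ⬝ᵥ w = 0) → X *ᵥ w = 0)
    (hskew : ∀ u ∈ U, ∀ v ∈ U, star u ⬝ᵥ (X *ᵥ v) + star (X *ᵥ u) ⬝ᵥ v = 0)
    (hcomm : ∀ (B : Matrix κ κ 𝕜), ∀ v ∈ U, X *ᵥ ((1 ⊗ₖ B) *ᵥ v) = (1 ⊗ₖ B) *ᵥ (X *ᵥ v)) :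
    ∃ S : Matrix ι ι 𝕜, Sᴴ = -S ∧ ∀ v ∈ U, (S ⊗ₖ 1) *ᵥ v = X *ᵥ v := by
  obtain ⟨P, hP⟩ := exists_isOrthogonalProjection U
  have hUH (B : Matrix κ κ 𝕜) : ∀ u ∈ U, (1 ⊗ₖ B)ᴴ *ᵥ u ∈ U := by
    rw [conjTranspose_kronecker, conjTranspose_one]; exact hU Bᴴ
  have hXB (B : Matrix κ κ 𝕜) : Commute X (1 ⊗ₖ B) :=
    hP.commute_of_forall_mulVec_eq (hUH B) hX (hcomm B)
  have hXHB (B : Matrix κ κ 𝕜) : Commute Xᴴ (1 ⊗ₖ B) := by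
    have h := (hXB Bᴴ).star_star
    rwa [star_eq_conjTranspose, star_eq_conjTranspose, conjTranspose_kronecker, conjTranspose_one,
      conjTranspose_conjTranspose] at h
  have hPB (B : Matrix κ κ 𝕜) : Commute P (1 ⊗ₖ B) :=
    hP.commute_of_forall_mulVec_eq (hUH B) (fun _ => hP.mulVec_eq_zero) fun u hu => by
      rw [hP.mulVec_eq_self _ (hU B u hu), hP.mulVec_eq_self u hu]
  have hcompr : P * (X + Xᴴ) * P = 0 := eq_zero_of_forall_star_dotProduct_mulVec fun u v => by
    rw [← mulVec_mulVec, ← mulVec_mulVec, star_dotProduct_mulVec_eq, hP.isHermitian.eq,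
      add_mulVec, dotProduct_add, star_dotProduct_mulVec_eq Xᴴ, conjTranspose_conjTranspose]
    exact hskew _ (hP.mulVec_mem u) _ (hP.mulVec_mem v)
  obtain ⟨S, hS, hA⟩ := exists_skewHermitian_eq_kronecker_one (X - Xᴴ * (1 - P))
    (sub_star_mul_one_sub_mem_skewAdjoint hP.isHermitian.isSelfAdjoint
      (hP.mul_eq_of_forall_mulVec_eq_zero hX) hcompr)
    fun B => (hXB B).sub_left ((hXHB B).mul_left ((Commute.one_left _).sub_left (hPB B)))
  refine ⟨S, hS, fun v hv => ?_⟩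
  rw [← hA, sub_mulVec, ← mulVec_mulVec, sub_mulVec, one_mulVec, hP.mulVec_eq_self v hv,
    sub_self, mulVec_zero, sub_zero]

end Kronecker

section JointRange

variable {α m n : Type*} [Fintype n]

def jointRange (L : α → Matrix m n 𝕜) : Submodule 𝕜 (m → 𝕜) :=
  Submodule.span 𝕜 {w | ∃ (a : α) (x : n → 𝕜), w = L a *ᵥ x}

variable {L : α → Matrix m n 𝕜}

theorem mulVec_mem_jointRange (a : α) (x : n → 𝕜) : L a *ᵥ x ∈ jointRange L :=
  Submodule.subset_span ⟨a, x, rfl⟩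

theorem jointRange_le_iff {V : Submodule 𝕜 (m → 𝕜)} :
    jointRange L ≤ V ↔ ∀ a x, L a *ᵥ x ∈ V := by
  rw [jointRange, Submodule.span_le]
  exact ⟨fun h a x => h ⟨a, x, rfl⟩, by rintro h _ ⟨a, x, rfl⟩; exact h a x⟩

variable [Fintype m]

theorem mulVec_mem_jointRange_of_forall_exists {Q : Matrix m m 𝕜}
    (hQ : ∀ a, ∃ b, Q * L a = L b) {v : m → 𝕜} (hv : v ∈ jointRange L) :
    Q *ᵥ v ∈ jointRange L := by
  refine (jointRange_le_iff (V := (jointRange L).comap (mulVecLin Q))).mpr (fun a x => ?_) hv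
  obtain ⟨b, hb⟩ := hQ a
  simp only [Submodule.mem_comap, mulVecLin_apply, mulVec_mulVec, hb, mulVec_mem_jointRange]

theorem mulVec_eq_of_mem_jointRange {k : Type*} {X Y : Matrix k m 𝕜}
    (h : ∀ a, X * L a = Y * L a) {v : m → 𝕜} (hv : v ∈ jointRange L) : X *ᵥ v = Y *ᵥ v := by
  refine sub_eq_zero.mp ?_
  rw [← sub_mulVec]
  refine (jointRange_le_iff (V := LinearMap.ker (mulVecLin (X - Y)))).mpr (fun a x => ?_) hv
  rw [LinearMap.mem_ker, mulVecLin_apply, mulVec_mulVec, Matrix.sub_mul, h, sub_self, zero_mulVec]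

theorem star_dotProduct_mulVec_eq_zero_of_mem_jointRange {Y : Matrix m m 𝕜}
    (h : ∀ a b, (L a)ᴴ * Y * L b = 0) {u v : m → 𝕜} (hu : u ∈ jointRange L)
    (hv : v ∈ jointRange L) : star u ⬝ᵥ (Y *ᵥ v) = 0 := by
  refine star_dotProduct_mulVec_eq_zero_of_mem_span ?_ hu hv
  rintro _ ⟨a, x, rfl⟩ _ ⟨b, y, rfl⟩
  rw [mulVec_mulVec, ← conjTranspose_conjTranspose (L a), ← star_dotProduct_mulVec_eq,
    mulVec_mulVec, ← Matrix.mul_assoc, h, zero_mulVec, dotProduct_zero]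

theorem star_dotProduct_mulVec_add_eq_zero_of_mem_jointRange {M : α → Matrix m n 𝕜}
    {X : Matrix m m 𝕜} (hX : ∀ a, X * L a = M a)
    (hskew : ∀ a b, (M b)ᴴ * L a = -((L b)ᴴ * M a)) {u v : m → 𝕜} (hu : u ∈ jointRange L)
    (hv : v ∈ jointRange L) : star u ⬝ᵥ (X *ᵥ v) + star (X *ᵥ u) ⬝ᵥ v = 0 := by
  have hadj : star (X *ᵥ u) ⬝ᵥ v = star u ⬝ᵥ (Xᴴ *ᵥ v) := by
    rw [star_dotProduct_mulVec_eq, conjTranspose_conjTranspose]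
  rw [hadj, ← dotProduct_add, ← add_mulVec]
  refine star_dotProduct_mulVec_eq_zero_of_mem_jointRange (fun a b => ?_) hu hv
  rw [Matrix.mul_add, Matrix.add_mul, Matrix.mul_assoc, hX, ← conjTranspose_mul, hX, hskew,
    add_neg_cancel]

end JointRange

end Matrix

/-- If `Ŝ` satisfies `Ŝ L_R = M_R` for all `R`, vanishes on `U^⊥` where
`U = span{L_R x}`, and the families satisfy the skew relations
`M_{R'}ᴴ L_R = −L_{R'}ᴴ M_R` and the intertwining relations
`L_{R'R} = (I ⊗ R') L_R`, `M_{R'R} = (I ⊗ R') M_R`, then the compression of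
`Ŝ` to `U` is skew-Hermitian and commutes with every `(I ⊗ R)|_U`, and `Ŝ`
can be modified on `U^⊥` to have the form `S ⊗ I_n` for a skew-Hermitian `S`
while still satisfying `Ŝ L_R = M_R` for all `R`. -/
theorem stmt19 {n m : ℕ}
    (L M : Matrix (Fin n) (Fin n) ℂ → Matrix (Fin (m + 1) × Fin n) (Fin n) ℂ)
    (hskew : ∀ R R' : Matrix (Fin n) (Fin n) ℂ,
      (M R')ᴴ * L R = -((L R')ᴴ * M R))
    (hLint : ∀ R' R : Matrix (Fin n) (Fin n) ℂ,
      L (R' * R) = (((1 : Matrix (Fin (m + 1)) (Fin (m + 1)) ℂ) ⊗ₖ R')) * L R)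
    (hMint : ∀ R' R : Matrix (Fin n) (Fin n) ℂ,
      M (R' * R) = (((1 : Matrix (Fin (m + 1)) (Fin (m + 1)) ℂ) ⊗ₖ R')) * M R)
    (U : Submodule ℂ (Fin (m + 1) × Fin n → ℂ))
    (hU : U = Submodule.span ℂ
      {w | ∃ (R : Matrix (Fin n) (Fin n) ℂ) (x : Fin n → ℂ), w = (L R) *ᵥ x})
    (S' : Matrix (Fin (m + 1) × Fin n) (Fin (m + 1) × Fin n) ℂ)
    (hS' : ∀ R, S' * L R = M R)
    (hvanish : ∀ v : Fin (m + 1) × Fin n → ℂ,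
      (∀ u ∈ U, star u ⬝ᵥ v = 0) → S' *ᵥ v = 0) :
    (∀ u ∈ U, ∀ v ∈ U,
      star u ⬝ᵥ (S' *ᵥ v) + star (S' *ᵥ u) ⬝ᵥ v = 0) ∧
    (∀ (R : Matrix (Fin n) (Fin n) ℂ), ∀ v ∈ U,
      S' *ᵥ (((1 : Matrix (Fin (m + 1)) (Fin (m + 1)) ℂ) ⊗ₖ R) *ᵥ v) =
        ((1 : Matrix (Fin (m + 1)) (Fin (m + 1)) ℂ) ⊗ₖ R) *ᵥ (S' *ᵥ v)) ∧
    (∃ S : Matrix (Fin (m + 1)) (Fin (m + 1)) ℂ, Sᴴ = -S ∧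
      (∀ v ∈ U, (S ⊗ₖ (1 : Matrix (Fin n) (Fin n) ℂ)) *ᵥ v = S' *ᵥ v) ∧
      ∀ R, (S ⊗ₖ (1 : Matrix (Fin n) (Fin n) ℂ)) * L R = M R) := by
  subst hU
  have hinv : ∀ (R' : Matrix (Fin n) (Fin n) ℂ), ∀ v ∈ jointRange L,
      ((1 : Matrix (Fin (m + 1)) (Fin (m + 1)) ℂ) ⊗ₖ R') *ᵥ v ∈ jointRange L :=
    fun R' _ => mulVec_mem_jointRange_of_forall_exists fun R => ⟨R' * R, (hLint R' R).symm⟩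
  have hskewU : ∀ u ∈ jointRange L, ∀ v ∈ jointRange L,
      star u ⬝ᵥ (S' *ᵥ v) + star (S' *ᵥ u) ⬝ᵥ v = 0 := fun u hu v hv =>
    star_dotProduct_mulVec_add_eq_zero_of_mem_jointRange hS' hskew hu hv
  have hcommU : ∀ (R : Matrix (Fin n) (Fin n) ℂ), ∀ v ∈ jointRange L,
      S' *ᵥ (((1 : Matrix (Fin (m + 1)) (Fin (m + 1)) ℂ) ⊗ₖ R) *ᵥ v) =
        ((1 : Matrix (Fin (m + 1)) (Fin (m + 1)) ℂ) ⊗ₖ R) *ᵥ (S' *ᵥ v) := fun R v hv => by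
    rw [mulVec_mulVec, mulVec_mulVec]
    refine mulVec_eq_of_mem_jointRange (fun R₀ => ?_) hv
    rw [Matrix.mul_assoc, ← hLint, hS', hMint, ← hS', Matrix.mul_assoc]
  obtain ⟨S, hS, hSU⟩ := exists_skewHermitian_kronecker_one_mulVec_eq hinv hvanish hskewU hcommU
  refine ⟨hskewU, hcommU, S, hS, hSU, fun R => ext_iff_mulVec.mpr fun x => ?_⟩
  rw [← hS', ← mulVec_mulVec, ← mulVec_mulVec, hSU _ (mulVec_mem_jointRange R x)]
end
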